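/- Let m be a natural number, let l be a positive integer, and suppose ι is a C^{m,γ}-embedding with constant C. Then the total l-fold evaluation map (ℝⁿ)^l × X → ℝ^l defined by ((x₁, …, x_l), f) ↦ (f̂(x₁), …, f̂(x_l)) is of class C^m. -/

import Mathlib

/-!
The evaluations `f ↦ f̂(x)` form a map `ev : ℝⁿ → (X →L[ℝ] ℝ)`, and the total evaluation map is
`((xᵢ), f) ↦ (ev xᵢ f)ᵢ`, so it suffices that `ev` is `C^m` in operator norm. This goes by
induction on `m`: the uniform Hölder bound on the top derivative makes the bundled top derivative
continuous in operator norm, and a family of `C¹` functions whose bundled derivative is continuous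
in operator norm is itself differentiable in operator norm, by the mean value inequality.
-/

/-- `ι : X →ₗ[ℝ] ((Fin n → ℝ) → ℝ)` is a `C^{m,γ}`-embedding with constant `C`:
for every `f : X` the function `f̂ = ι f` is `m`-times continuously differentiable,
all iterated derivatives up to order `m` are bounded by `C‖f‖`, and the `m`-th
iterated derivative is `γ`-Hölder with constant `C‖f‖`. -/
def IsCmGammaEmbedding {X : Type*} [NormedAddCommGroup X] [NormedSpace ℝ X]
    (n : ℕ) (ι : X →ₗ[ℝ] ((Fin n → ℝ) → ℝ)) (m : ℕ) (γ C : ℝ) : Prop :=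
  ∀ f : X,
    ContDiff ℝ m (ι f) ∧
    (∀ i : ℕ, i ≤ m → ∀ x : Fin n → ℝ, ‖iteratedFDeriv ℝ i (ι f) x‖ ≤ C * ‖f‖) ∧
    ∀ x y : Fin n → ℝ,
      ‖iteratedFDeriv ℝ m (ι f) x - iteratedFDeriv ℝ m (ι f) y‖ ≤ C * ‖f‖ * ‖x - y‖ ^ γ

open Filter Topology

universe u

section

variable {𝕜 : Type*} [NontriviallyNormedField 𝕜] {E F : Type*} [NormedAddCommGroup E]
  [NormedSpace 𝕜 E] [NormedAddCommGroup F] [NormedSpace 𝕜 F]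

theorem norm_iteratedFDeriv_zero_sub (f : E → F) (x y : E) :
    ‖iteratedFDeriv 𝕜 0 f x - iteratedFDeriv 𝕜 0 f y‖ = ‖f x - f y‖ := by
  rw [iteratedFDeriv_zero_eq_comp, Function.comp_apply, Function.comp_apply,
    ← LinearIsometryEquiv.map_sub, LinearIsometryEquiv.norm_map]

theorem norm_iteratedFDeriv_fderiv_sub (f : E → F) (i : ℕ) (x y : E) :
    ‖iteratedFDeriv 𝕜 i (fderiv 𝕜 f) x - iteratedFDeriv 𝕜 i (fderiv 𝕜 f) y‖ =
      ‖iteratedFDeriv 𝕜 (i + 1) f x - iteratedFDeriv 𝕜 (i + 1) f y‖ := by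
  rw [iteratedFDeriv_succ_eq_comp_right, iteratedFDeriv_succ_eq_comp_right, Function.comp_apply,
    Function.comp_apply, ← LinearIsometryEquiv.map_sub, LinearIsometryEquiv.norm_map]

end

section

-- `E` and `Y` share a universe so that the induction below can replace `Y` by `E →L[ℝ] Y`.
variable {X : Type*} [NormedAddCommGroup X] [NormedSpace ℝ X]
  {E : Type u} [NormedAddCommGroup E] [NormedSpace ℝ E]
  {Y : Type u} [NormedAddCommGroup Y] [NormedSpace ℝ Y]

omit [NormedSpace ℝ E] in
theorem continuous_of_holder_apply {γ C : ℝ} (hγ : 0 < γ) (hC : 0 ≤ C)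
    {Φ : E → X →L[ℝ] Y} (h : ∀ g x y, ‖Φ x g - Φ y g‖ ≤ C * ‖g‖ * ‖x - y‖ ^ γ) :
    Continuous Φ := by
  have hnorm : ∀ x y, ‖Φ x - Φ y‖ ≤ C * ‖x - y‖ ^ γ := fun x y =>
    ContinuousLinearMap.opNorm_le_bound _ (by positivity) fun g =>
      (h g x y).trans_eq (by ring)
  refine continuous_iff_continuousAt.2 fun x₀ => tendsto_iff_norm_sub_tendsto_zero.2 ?_
  refine squeeze_zero (fun _ => norm_nonneg _) (fun x => hnorm x x₀) ?_
  have hlim : Tendsto (fun x => ‖x - x₀‖ ^ γ) (𝓝 x₀) (𝓝 (‖x₀ - x₀‖ ^ γ)) :=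
    ((continuous_id.sub continuous_const).norm.rpow_const fun _ => Or.inr hγ.le).tendsto x₀
  simpa [Real.zero_rpow hγ.ne'] using hlim.const_mul C

theorem hasFDerivAt_of_hasFDerivAt_apply {Φ : E → X →L[ℝ] Y} {Φ' : E → X →L[ℝ] E →L[ℝ] Y}
    (hd : ∀ g x, HasFDerivAt (fun x => Φ x g) (Φ' x g) x) {x₀ : E} (hc : ContinuousAt Φ' x₀) :
    HasFDerivAt Φ (Φ' x₀).flip x₀ := by
  refine hasFDerivAt_iff_isLittleO.2 (Asymptotics.isLittleO_iff.2 fun ε hε => ?_)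
  obtain ⟨δ, hδ, hball⟩ := Metric.eventually_nhds_iff_ball.1
    (hc.eventually (Metric.closedBall_mem_nhds (Φ' x₀) hε))
  filter_upwards [Metric.ball_mem_nhds x₀ hδ] with x hx
  refine ContinuousLinearMap.opNorm_le_bound _ (by positivity) fun g => ?_
  have hbound : ∀ z ∈ Metric.ball x₀ δ, ‖Φ' z g - Φ' x₀ g‖ ≤ ε * ‖g‖ := fun z hz =>
    calc ‖Φ' z g - Φ' x₀ g‖ ≤ ‖Φ' z - Φ' x₀‖ * ‖g‖ := (Φ' z - Φ' x₀).le_opNorm g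
      _ ≤ ε * ‖g‖ := by gcongr; exact dist_eq_norm (Φ' z) _ ▸ hball z hz
  have hmv := (convex_ball x₀ δ).norm_image_sub_le_of_norm_hasFDerivWithin_le'
    (fun x _ => (hd g x).hasFDerivWithinAt) hbound (Metric.mem_ball_self hδ) hx
  simpa [mul_right_comm] using hmv

noncomputable def pointwiseFDeriv (Φ : E → X →L[ℝ] Y) (hd : ∀ g, Differentiable ℝ fun x => Φ x g)
    {C : ℝ} (hb : ∀ g x, ‖fderiv ℝ (fun x => Φ x g) x‖ ≤ C * ‖g‖) (x : E) :
    X →L[ℝ] E →L[ℝ] Y :=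
  LinearMap.mkContinuous
    { toFun := fun g => fderiv ℝ (fun x => Φ x g) x
      map_add' := fun g h => by simp only [map_add]; exact fderiv_add (hd g x) (hd h x)
      map_smul' := fun c g => by simp only [map_smul]; exact fderiv_const_smul (hd g x) c }
    C fun g => hb g x

theorem contDiff_of_iteratedFDeriv_apply_holder {γ C : ℝ} (hγ : 0 < γ) (hC : 0 ≤ C) (m : ℕ)
    {Φ : E → X →L[ℝ] Y} (hcd : ∀ g, ContDiff ℝ m fun x => Φ x g)
    (hbd : ∀ i < m, ∀ g x, ‖iteratedFDeriv ℝ (i + 1) (fun x => Φ x g) x‖ ≤ C * ‖g‖)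
    (hhol : ∀ g x y, ‖iteratedFDeriv ℝ m (fun x => Φ x g) x -
      iteratedFDeriv ℝ m (fun x => Φ x g) y‖ ≤ C * ‖g‖ * ‖x - y‖ ^ γ) :
    ContDiff ℝ m Φ := by
  induction m generalizing Y with
  | zero =>
    refine contDiff_zero.2 (continuous_of_holder_apply hγ hC fun g x y => ?_)
    simpa only [norm_iteratedFDeriv_zero_sub] using hhol g x y
  | succ m ih =>
    have hd : ∀ g, Differentiable ℝ fun x => Φ x g :=
      fun g => (hcd g).differentiable (by simp)
    have hb : ∀ g x, ‖fderiv ℝ (fun x => Φ x g) x‖ ≤ C * ‖g‖ := fun g x => by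
      simpa using hbd 0 m.succ_pos g x
    have hΦ' : ContDiff ℝ m (pointwiseFDeriv Φ hd hb) := by
      refine ih (fun g => ?_) (fun i hi g x => ?_) (fun g x y => ?_)
      · exact (contDiff_succ_iff_fderiv.1 (by exact_mod_cast hcd g)).2.2
      · exact norm_iteratedFDeriv_fderiv.trans_le (hbd (i + 1) (by omega) g x)
      · exact (norm_iteratedFDeriv_fderiv_sub _ m x y).trans_le (hhol g x y)
    exact contDiff_succ_iff_hasFDerivAt.2
      ⟨_, (ContinuousLinearMap.flipₗᵢ ℝ X E Y).contDiff.comp hΦ', fun x =>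
        hasFDerivAt_of_hasFDerivAt_apply (fun g x => (hd g x).hasFDerivAt)
          hΦ'.continuous.continuousAt⟩

end

theorem total_eval_contDiff_general {X : Type*} [NormedAddCommGroup X] [NormedSpace ℝ X]
    {n : ℕ} {γ C : ℝ} (hγ : 0 < γ) (hC : 0 ≤ C)
    (ι : X →ₗ[ℝ] ((Fin n → ℝ) → ℝ)) (m l : ℕ)
    (hemb : IsCmGammaEmbedding n ι m γ C) :
    ContDiff ℝ m
      (fun p : (Fin l → Fin n → ℝ) × X => fun i : Fin l => ι p.2 (p.1 i)) := by
  let ev (x : Fin n → ℝ) : X →L[ℝ] ℝ :=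
    ((LinearMap.proj x).comp ι).mkContinuous C fun g => by
      simpa using (hemb g).2.1 0 (Nat.zero_le m) x
  have hev : ContDiff ℝ m ev :=
    contDiff_of_iteratedFDeriv_apply_holder hγ hC m (fun g => (hemb g).1)
      (fun i hi g x => (hemb g).2.1 (i + 1) hi x) (fun g => (hemb g).2.2)
  refine contDiff_pi.2 fun i => ?_
  exact (hev.comp ((contDiff_apply ℝ _ i).comp contDiff_fst)).clm_apply contDiff_snd

/-- If `ι` is a `C^{m,γ}`-embedding with constant `C` and `l` is a positive integer,
then the total `l`-fold evaluation map `(ℝⁿ)ˡ × X → ℝˡ`,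
`((x₁, …, x_l), f) ↦ (f̂(x₁), …, f̂(x_l))`, is of class `C^m`. -/
theorem total_eval_contDiff {X : Type*} [NormedAddCommGroup X] [NormedSpace ℝ X]
    [CompleteSpace X]
    {n : ℕ} (hn : 0 < n) {γ C : ℝ} (hγ : 0 < γ) (hγ1 : γ < 1) (hC : 0 ≤ C)
    (ι : X →ₗ[ℝ] ((Fin n → ℝ) → ℝ)) (m l : ℕ) (hl : 0 < l)
    (hemb : IsCmGammaEmbedding n ι m γ C) :
    ContDiff ℝ m
      (fun p : (Fin l → Fin n → ℝ) × X => fun i : Fin l => ι p.2 (p.1 i)) :=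
  total_eval_contDiff_general hγ hC ι m l hemb
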